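/- arXiv:1201.5051 — 4 statements merged into one kernel-verified Lean document; each statement's English description precedes it below -/
import Mathlib

section
/- Let p be an odd prime number and let ξ be a primitive p-th root of unity in ℂ. Then ∑_{j=1}^{p-1} 1/((1-ξ^j)(1-ξ^{2j})) = (p-1)(11-p)/24. -/
/-!
If `x ^ p = 1` and `x ≠ 1`, then `(1 - x)⁻¹ = -(1/p) ∑_{k<p} k x^k`. Expanding both factors this
way and summing over `j` with `∑_{j=1}^{p-1} ξ^{tj} = p·[p ∣ t] - 1` turns the sum into
`(p E - (∑_{k<p} k)²) / p²`, where `E` is the sum of `k l` over the pairs `k, l < p` with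
`p ∣ k + 2l`. For `p = 2m + 1` these pairs are `(0, 0)`, `(p - 2l, l)` and `(2l, p - l)` for
`1 ≤ l ≤ m`, whence `6E = 5m(m+1)(2m+1)`.
-/

open Finset

theorem one_sub_mul_sum_range_natCast_mul_pow {R : Type*} [CommRing R] (x : R) (n : ℕ) :
    (1 - x) * ∑ k ∈ range n, (k : R) * x ^ k = ∑ k ∈ range n, x ^ (k + 1) - n * x ^ n := by
  induction n with
  | zero => simp
  | succ n ih =>
    rw [sum_range_succ, mul_add, ih, sum_range_succ]
    push_cast
    ring

theorem inv_one_sub_eq_of_pow_eq_one {K : Type*} [Field K] {x : K} {n : ℕ} (hxn : x ^ n = 1)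
    (hx : x ≠ 1) (hn : (n : K) ≠ 0) :
    (1 - x)⁻¹ = -(∑ k ∈ range n, (k : K) * x ^ k) / n := by
  have key := one_sub_mul_sum_range_natCast_mul_pow x n
  simp_rw [pow_succ, ← sum_mul, geom_sum_eq hx, hxn, sub_self, zero_div, zero_mul, zero_sub,
    mul_one] at key
  refine inv_eq_of_mul_eq_one_right ?_
  rw [mul_div_assoc', mul_neg, key, neg_neg, div_self hn]

theorem IsPrimitiveRoot.sum_Icc_pow_pow {K : Type*} [Field K] {ξ : K} {p : ℕ}
    (hξ : IsPrimitiveRoot ξ p) (hp : 0 < p) (t : ℕ) :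
    ∑ j ∈ Icc 1 (p - 1), (ξ ^ t) ^ j = if p ∣ t then (p : K) - 1 else -1 := by
  have hIcc : Icc 1 (p - 1) = (range p).erase 0 := by
    ext j
    simp only [mem_Icc, mem_erase, mem_range]
    omega
  rw [hIcc, sum_erase_eq_sub (by simpa using hp), pow_zero]
  split_ifs with ht
  · simp [(hξ.pow_eq_one_iff_dvd t).mpr ht]
  · rw [geom_sum_eq (mt (hξ.pow_eq_one_iff_dvd t).mp ht), ← pow_mul, mul_comm, pow_mul,
      hξ.pow_eq_one, one_pow]
    simp

theorem IsPrimitiveRoot.sum_one_div_one_sub_pow_mul_one_sub_pow {K : Type*} [Field K]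
    {ξ : K} {p a : ℕ} (hξ : IsPrimitiveRoot ξ p) (hp : (p : K) ≠ 0) (ha : p.Coprime a) :
    ∑ j ∈ Icc 1 (p - 1), 1 / ((1 - ξ ^ j) * (1 - ξ ^ (a * j))) =
      (p * ∑ k ∈ range p, ∑ l ∈ range p, (if p ∣ k + a * l then (k : K) * l else 0)
        - (∑ k ∈ range p, (k : K)) ^ 2) / p ^ 2 := by
  have hp₀ : 0 < p := Nat.pos_of_ne_zero fun h => hp (by rw [h, Nat.cast_zero])
  have inv_one_sub : ∀ t, ¬ p ∣ t → (1 - ξ ^ t)⁻¹ = -(∑ k ∈ range p, (k : K) * (ξ ^ t) ^ k) / p :=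
    fun t ht => inv_one_sub_eq_of_pow_eq_one
      (by rw [← pow_mul, mul_comm, pow_mul, hξ.pow_eq_one, one_pow])
      (mt (hξ.pow_eq_one_iff_dvd t).mp ht) hp
  have expand : ∀ j ∈ Icc 1 (p - 1), 1 / ((1 - ξ ^ j) * (1 - ξ ^ (a * j))) =
      ∑ k ∈ range p, ∑ l ∈ range p, (k : K) * l * (ξ ^ (k + a * l)) ^ j / p ^ 2 := by
    intro j hj
    obtain ⟨hj₁, hjp⟩ := mem_Icc.mp hj
    have hj : ¬ p ∣ j := Nat.not_dvd_of_pos_of_lt hj₁ (by omega)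
    have haj : ¬ p ∣ a * j := fun h => hj (ha.dvd_of_dvd_mul_left h)
    rw [one_div, mul_inv, inv_one_sub j hj, inv_one_sub _ haj, neg_div, neg_div, neg_mul_neg,
      div_mul_div_comm, ← sq, sum_mul_sum, sum_div]
    refine sum_congr rfl fun k _ => ?_
    rw [sum_div]
    refine sum_congr rfl fun l _ => ?_
    ring
  calc ∑ j ∈ Icc 1 (p - 1), 1 / ((1 - ξ ^ j) * (1 - ξ ^ (a * j)))
      = ∑ k ∈ range p, ∑ l ∈ range p,
          (k : K) * l * (∑ j ∈ Icc 1 (p - 1), (ξ ^ (k + a * l)) ^ j) / p ^ 2 := by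
        rw [sum_congr rfl expand, sum_comm]
        refine sum_congr rfl fun k _ => ?_
        rw [sum_comm]
        refine sum_congr rfl fun l _ => ?_
        rw [mul_sum, sum_div]
    _ = ∑ k ∈ range p, ∑ l ∈ range p,
          (p * (if p ∣ k + a * l then (k : K) * l else 0) - k * l) / p ^ 2 := by
        refine sum_congr rfl fun k _ => sum_congr rfl fun l _ => ?_
        rw [hξ.sum_Icc_pow_pow hp₀]
        split_ifs <;> ring
    _ = _ := by
        rw [sq (∑ k ∈ range p, (k : K)), sum_mul_sum, mul_sum, ← sum_sub_distrib, sum_div]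
        refine sum_congr rfl fun k _ => ?_
        rw [mul_sum, ← sum_sub_distrib, sum_div]

theorem sum_range_ite_dvd_add_mul_eq {M : Type*} [AddCommMonoid M] {p a l k₀ : ℕ} (f : ℕ → M)
    (hk₀ : k₀ < p) (hdvd : p ∣ k₀ + a * l) :
    ∑ k ∈ range p, (if p ∣ k + a * l then f k else 0) = f k₀ := by
  rw [sum_eq_single_of_mem k₀ (mem_range.mpr hk₀), if_pos hdvd]
  intro k hk hne
  rw [if_neg]
  intro h
  have hmod : k ≡ k₀ [MOD p] := Nat.ModEq.add_right_cancel' (a * l)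
    ((Nat.modEq_zero_iff_dvd.mpr h).trans (Nat.modEq_zero_iff_dvd.mpr hdvd).symm)
  exact hne (Nat.ModEq.eq_of_lt_of_lt hmod (mem_range.mp hk) hk₀)

theorem sum_range_two_mul_add_one {M : Type*} [AddCommMonoid M] (f : ℕ → M) (m : ℕ) :
    ∑ l ∈ range (2 * m + 1), f l = f 0 + ∑ i ∈ range m, (f (i + 1) + f (2 * m - i)) := by
  have upper : ∑ i ∈ range m, f (m + i + 1) = ∑ i ∈ range m, f (2 * m - i) := by
    rw [← sum_range_reflect]
    exact sum_congr rfl fun i hi => congrArg f (by have := mem_range.mp hi; omega)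
  rw [sum_range_succ', two_mul, sum_range_add, ← two_mul, upper, sum_add_distrib, add_comm]

theorem six_mul_sum_range_sum_range_ite_dvd_add_two_mul {R : Type*} [CommRing R] (m : ℕ) :
    6 * ∑ k ∈ range (2 * m + 1), ∑ l ∈ range (2 * m + 1),
        (if 2 * m + 1 ∣ k + 2 * l then (k : R) * l else 0) = 5 * m * (m + 1) * (2 * m + 1) := by
  have inner : ∀ l k₀, k₀ < 2 * m + 1 → 2 * m + 1 ∣ k₀ + 2 * l →
      ∑ k ∈ range (2 * m + 1), (if 2 * m + 1 ∣ k + 2 * l then (k : R) * l else 0) = k₀ * l :=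
    fun l k₀ hk₀ hdvd => sum_range_ite_dvd_add_mul_eq (fun k => (k : R) * l) hk₀ hdvd
  have pair : ∀ i ∈ range m,
      ∑ k ∈ range (2 * m + 1),
          (if 2 * m + 1 ∣ k + 2 * (i + 1) then (k : R) * (i + 1 : ℕ) else 0)
        + ∑ k ∈ range (2 * m + 1),
          (if 2 * m + 1 ∣ k + 2 * (2 * m - i) then (k : R) * (2 * m - i : ℕ) else 0)
        = (i + 1) * (6 * m - 4 * i - 1) := by
    intro i hi
    have hi := mem_range.mp hi
    rw [inner _ (2 * m + 1 - 2 * (i + 1)) (by omega) ⟨1, by omega⟩,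
      inner _ (2 * (i + 1)) (by omega) ⟨2, by omega⟩]
    push_cast [Nat.cast_sub (by omega : 2 * (i + 1) ≤ 2 * m + 1),
      Nat.cast_sub (by omega : i ≤ 2 * m)]
    ring
  have faulhaber : ∀ n, 6 * ∑ i ∈ range n, ((i : R) + 1) * (6 * m - 4 * i - 1)
      = n * (n + 1) * (18 * m - 8 * n + 5) := by
    intro n
    induction n with
    | zero => simp
    | succ n ih => rw [sum_range_succ, mul_add, ih]; push_cast; ring
  rw [sum_comm, sum_range_two_mul_add_one, sum_congr rfl pair]
  simp only [Nat.cast_zero, mul_zero, ite_self, sum_const_zero, zero_add]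
  rw [faulhaber]
  ring

theorem sum_inv_one_sub_primitiveRoot_two_general (p : ℕ) (hodd : Odd p) (ξ : ℂ)
    (hξ : IsPrimitiveRoot ξ p) :
    ∑ j ∈ Finset.Icc 1 (p - 1), 1 / ((1 - ξ ^ j) * (1 - ξ ^ (2 * j)))
      = ((p : ℂ) - 1) * (11 - (p : ℂ)) / 24 := by
  have hp : (p : ℂ) ≠ 0 := Nat.cast_ne_zero.mpr hodd.pos.ne'
  rw [hξ.sum_one_div_one_sub_pow_mul_one_sub_pow hp hodd.coprime_two_right]
  obtain ⟨m, rfl⟩ := hodd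
  have hE : ∑ k ∈ range (2 * m + 1), ∑ l ∈ range (2 * m + 1),
      (if 2 * m + 1 ∣ k + 2 * l then (k : ℂ) * l else 0) = 5 * m * (m + 1) * (2 * m + 1) / 6 := by
    rw [eq_div_iff (by norm_num), mul_comm]
    exact six_mul_sum_range_sum_range_ite_dvd_add_two_mul m
  have hS : ∑ k ∈ range (2 * m + 1), (k : ℂ) = m * (2 * m + 1) := by
    rw [← Nat.cast_sum, sum_range_id, Nat.add_sub_cancel,
      Nat.mul_div_assoc _ (dvd_mul_right 2 m), Nat.mul_div_cancel_left m two_pos]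
    push_cast
    ring
  rw [hE, hS]
  push_cast at hp ⊢
  field_simp
  ring

/-- Let `p` be an odd prime and `ξ` a primitive `p`-th root of unity in `ℂ`.
Then `∑_{j=1}^{p-1} 1/((1-ξ^j)(1-ξ^{2j})) = (p-1)(11-p)/24`. -/
theorem sum_inv_one_sub_primitiveRoot_two (p : ℕ) (hp : p.Prime) (hodd : Odd p) (ξ : ℂ)
    (hξ : IsPrimitiveRoot ξ p) :
    ∑ j ∈ Finset.Icc 1 (p - 1), 1 / ((1 - ξ ^ j) * (1 - ξ ^ (2 * j)))
      = ((p : ℂ) - 1) * (11 - (p : ℂ)) / 24 :=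
  sum_inv_one_sub_primitiveRoot_two_general p hodd ξ hξ
end

section
/- Let n ≥ 2 be a natural number and let ζ be a primitive n-th root of unity in ℂ. Then ∑_{k=1}^{n-1} 1/((1-ζ^k)(1-ζ^{-k})) = (n^2-1)/12. -/
/-!
For an `n`-th root of unity `x ≠ 1`, the weighted geometric sum `S(x) = ∑_{j<n} j x^j` equals
`n / (x - 1)`, so the summand at `x = ζ^k` is `S(x) S(x⁻¹) / n²`. By Parseval's identity for the
discrete Fourier transform, `∑_{k<n} S(ζ^k) S(ζ^{-k}) = n ∑_{j<n} j²`; removing the term `k = 0`,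
which is `(∑_{j<n} j)²`, leaves `n²(n² - 1)/12`.
-/

open Finset

theorem sub_one_sq_mul_sum_range_mul_pow {R : Type*} [CommRing R] (x : R) (n : ℕ) :
    (x - 1) ^ 2 * ∑ j ∈ range n, (j : R) * x ^ j = n * x ^ n * (x - 1) - x * (x ^ n - 1) := by
  induction n with
  | zero => simp
  | succ n ih => rw [sum_range_succ, mul_add, ih]; push_cast; ring

theorem sum_range_sq_mul_six {R : Type*} [CommRing R] (n : ℕ) :
    (∑ j ∈ range n, (j : R) ^ 2) * 6 = n * (n - 1) * (2 * n - 1) := by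
  induction n with
  | zero => simp
  | succ n ih => rw [sum_range_succ, add_mul, ih]; push_cast; ring

section Field

variable {K : Type*} [Field K]

theorem sum_range_mul_pow_of_pow_eq_one {x : K} {n : ℕ} (hx : x ≠ 1) (hxn : x ^ n = 1) :
    ∑ j ∈ range n, (j : K) * x ^ j = n / (x - 1) := by
  have hx' : x - 1 ≠ 0 := sub_ne_zero.mpr hx
  rw [eq_div_iff hx', ← mul_left_inj' hx', mul_assoc, ← sq, mul_comm,
    sub_one_sq_mul_sum_range_mul_pow, hxn]
  ring

theorem one_div_one_sub_mul_one_sub_inv_of_pow_eq_one {x : K} {n : ℕ} (hn : (n : K) ≠ 0)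
    (hx : x ≠ 1) (hxn : x ^ n = 1) :
    1 / ((1 - x) * (1 - x⁻¹))
      = (∑ j ∈ range n, (j : K) * x ^ j) * (∑ j ∈ range n, (j : K) * x⁻¹ ^ j) / n ^ 2 := by
  have hx' : x⁻¹ ≠ 1 := inv_ne_one.mpr hx
  rw [sum_range_mul_pow_of_pow_eq_one hx hxn,
    sum_range_mul_pow_of_pow_eq_one hx' (by rw [inv_pow, hxn, inv_one])]
  have hx0 : x ≠ 0 := ne_zero_pow (n := n) (by rintro rfl; simp at hn) (by simp [hxn])
  have : x - 1 ≠ 0 := sub_ne_zero.mpr hx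
  have : 1 - x ≠ 0 := sub_ne_zero.mpr hx.symm
  field_simp

namespace IsPrimitiveRoot

variable {ζ : K} {n : ℕ}

theorem sum_range_pow_mul_inv_pow_pow (hζ : IsPrimitiveRoot ζ n) {i j : ℕ} (hi : i < n)
    (hj : j < n) : ∑ k ∈ range n, (ζ ^ j * (ζ ^ i)⁻¹) ^ k = if j = i then (n : K) else 0 := by
  have hζ0 : ζ ≠ 0 := hζ.ne_zero (by omega)
  split_ifs with hji
  · simp [hji, hζ0]
  · have hne : ζ ^ j * (ζ ^ i)⁻¹ ≠ 1 := fun h =>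
      hji (hζ.pow_inj hj hi ((mul_inv_eq_one₀ (pow_ne_zero _ hζ0)).mp h))
    have hpow : (ζ ^ j * (ζ ^ i)⁻¹) ^ n = 1 := by
      rw [mul_pow, inv_pow, ← pow_mul, ← pow_mul, mul_comm j, mul_comm i, pow_mul, pow_mul,
        hζ.pow_eq_one, one_pow, one_pow, inv_one, mul_one]
    rw [geom_sum_eq hne, hpow, sub_self, zero_div]

theorem sum_range_mul_sum_range_inv (hζ : IsPrimitiveRoot ζ n) (a b : ℕ → K) :
    ∑ k ∈ range n, (∑ j ∈ range n, a j * (ζ ^ k) ^ j) * ∑ i ∈ range n, b i * (ζ ^ k)⁻¹ ^ i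
      = n * ∑ j ∈ range n, a j * b j := by
  have hswap (k i j : ℕ) : (ζ ^ k) ^ j * (ζ ^ k)⁻¹ ^ i = (ζ ^ j * (ζ ^ i)⁻¹) ^ k := by
    rw [mul_pow, inv_pow, inv_pow, ← pow_mul, ← pow_mul, ← pow_mul, ← pow_mul, mul_comm k j,
      mul_comm k i]
  calc _ = ∑ j ∈ range n, ∑ i ∈ range n, a j * b i * ∑ k ∈ range n, (ζ ^ j * (ζ ^ i)⁻¹) ^ k := by
        simp_rw [sum_mul_sum, mul_sum]
        rw [sum_comm]
        refine sum_congr rfl fun j _ => ?_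
        rw [sum_comm]
        refine sum_congr rfl fun i _ => sum_congr rfl fun k _ => ?_
        rw [← hswap]
        ring
    _ = ∑ j ∈ range n, a j * b j * n := by
        refine sum_congr rfl fun j hj => ?_
        rw [mem_range] at hj
        rw [sum_congr rfl fun i hi => by rw [hζ.sum_range_pow_mul_inv_pow_pow (mem_range.mp hi) hj]]
        simp [mul_ite, hj]
    _ = _ := by rw [← sum_mul, mul_comm]

end IsPrimitiveRoot

end Field

/-- Let `n ≥ 2` and `ζ` be a primitive `n`-th root of unity in `ℂ`.
Then `∑_{k=1}^{n-1} 1/((1-ζ^k)(1-ζ^{-k})) = (n^2-1)/12`. -/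
theorem sum_inv_one_sub_primitiveRoot_inv (n : ℕ) (hn : 2 ≤ n) (ζ : ℂ)
    (hζ : IsPrimitiveRoot ζ n) :
    ∑ k ∈ Finset.Icc 1 (n - 1), 1 / ((1 - ζ ^ k) * (1 - ζ ^ (-(k : ℤ))))
      = ((n : ℂ) ^ 2 - 1) / 12 := by
  have hn0 : (n : ℂ) ≠ 0 := by exact_mod_cast (show n ≠ 0 by omega)
  have hterm : ∀ k ∈ Ico 1 n, 1 / ((1 - ζ ^ k) * (1 - ζ ^ (-(k : ℤ))))
      = (∑ j ∈ range n, (j : ℂ) * (ζ ^ k) ^ j) * (∑ j ∈ range n, (j : ℂ) * (ζ ^ k)⁻¹ ^ j)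
        / n ^ 2 := by
    intro k hk
    obtain ⟨hk1, hkn⟩ := mem_Ico.mp hk
    rw [zpow_neg, zpow_natCast]
    exact one_div_one_sub_mul_one_sub_inv_of_pow_eq_one hn0
      (hζ.pow_ne_one_of_pos_of_lt (by omega) hkn) (by rw [pow_right_comm, hζ.pow_eq_one, one_pow])
  have hparseval := hζ.sum_range_mul_sum_range_inv (fun j => (j : ℂ)) (fun j => (j : ℂ))
  rw [sum_range_eq_add_Ico _ (by omega)] at hparseval
  simp only [pow_zero, inv_one, one_pow, mul_one, ← sq] at hparseval
  have hsum : (∑ j ∈ range n, (j : ℂ)) * 2 = n * (n - 1) := by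
    have h := congrArg (Nat.cast (R := ℂ)) (sum_range_id_mul_two n)
    push_cast [Nat.cast_sub (by omega : 1 ≤ n)] at h
    exact h
  have hsq := sum_range_sq_mul_six (R := ℂ) n
  have hIcc : Icc 1 (n - 1) = Ico 1 n := by ext; simp; omega
  rw [hIcc, sum_congr rfl hterm, ← sum_div, div_eq_div_iff (pow_ne_zero 2 hn0) (by norm_num)]
  linear_combination 12 * hparseval + 2 * (n : ℂ) * hsq
    - 3 * (2 * ∑ j ∈ range n, (j : ℂ) + n * (n - 1)) * hsum
end

section
/- Let ξ be a primitive 5th root of unity in ℂ and for b = 1, 2, 3, 4 set c(b) = ∑_{a=1}^{4} 1/((1+ξ^a)(1+ξ^{ab})). Then c(1) = -4, c(2) = 1, c(3) = 1, and c(4) = 6. -/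
open Finset

/-- Let `ξ` be a primitive 5th root of unity in `ℂ` and for `b = 1, 2, 3, 4` set
`c(b) = ∑_{a=1}^{4} 1/((1+ξ^a)(1+ξ^{ab}))`. Then `c(1) = -4`, `c(2) = 1`, `c(3) = 1`
and `c(4) = 6`. -/
theorem sum_inv_one_add_primitiveRoot_five (ξ : ℂ) (hξ : IsPrimitiveRoot ξ 5) :
    (∑ a ∈ Finset.Icc 1 4, 1 / ((1 + ξ ^ a) * (1 + ξ ^ (a * 1))) = -4) ∧
    (∑ a ∈ Finset.Icc 1 4, 1 / ((1 + ξ ^ a) * (1 + ξ ^ (a * 2))) = 1) ∧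
    (∑ a ∈ Finset.Icc 1 4, 1 / ((1 + ξ ^ a) * (1 + ξ ^ (a * 3))) = 1) ∧
    (∑ a ∈ Finset.Icc 1 4, 1 / ((1 + ξ ^ a) * (1 + ξ ^ (a * 4))) = 6) := by
  have h5 : ξ ^ 5 = 1 := hξ.pow_eq_one
  have hne1 : ξ ≠ 1 := hξ.ne_one (by norm_num)
  have h : ξ ^ 4 + ξ ^ 3 + ξ ^ 2 + ξ + 1 = 0 := by
    have := sub_ne_zero.mpr hne1
    apply mul_left_cancel₀ this
    linear_combination h5
  have e1 : (1 + ξ) ⁻¹ = -ξ - ξ ^ 3 :=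
    inv_eq_of_mul_eq_one_right (by linear_combination -h)
  have e2 : (1 + ξ ^ 2) ⁻¹ = -ξ - ξ ^ 2 :=
    inv_eq_of_mul_eq_one_right (by linear_combination -h)
  have e3 : (1 + ξ ^ 3) ⁻¹ = 1 + ξ + ξ ^ 2 :=
    inv_eq_of_mul_eq_one_right (by linear_combination h + h5)
  have e4 : (1 + ξ ^ 4) ⁻¹ = 1 + ξ + ξ ^ 3 :=
    inv_eq_of_mul_eq_one_right (by linear_combination h + (1 + ξ ^ 2) * h5)
  have p6 : ξ ^ 6 = ξ := by linear_combination ξ * h5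
  have p8 : ξ ^ 8 = ξ ^ 3 := by linear_combination ξ ^ 3 * h5
  have p9 : ξ ^ 9 = ξ ^ 4 := by linear_combination ξ ^ 4 * h5
  have p12 : ξ ^ 12 = ξ ^ 2 := by linear_combination (ξ ^ 7 + ξ ^ 2) * h5
  have p16 : ξ ^ 16 = ξ := by linear_combination (ξ ^ 11 + ξ ^ 6 + ξ) * h5
  have hIcc : (Finset.Icc 1 4 : Finset ℕ) = {1, 2, 3, 4} := rfl
  refine ⟨?_, ?_, ?_, ?_⟩ <;>
    rw [hIcc] <;>
    simp only [Finset.sum_insert, Finset.mem_insert, Finset.mem_singleton,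
      Finset.sum_singleton, one_div, mul_inv] <;>
    norm_num [p6, p8, p9, p12, p16, e1, e2, e3, e4]
  · linear_combination (6 - 2 * ξ + 2 * ξ ^ 2) * h
  · ring
  · ring
  · linear_combination (-6 + 2 * ξ - 2 * ξ ^ 2) * h
end

section
/- Let ξ be a primitive 8th root of unity in ℂ. Then ∑_{k=1}^{7} 1/((1-ξ^k)(1-ξ^{3k})) = 5/4, ∑_{k=1}^{7} 1/((1-ξ^k)(1-ξ^{5k})) = 9/4, and ∑_{k=1}^{7} 1/((1-ξ^k)(1-ξ^{7k})) = 21/4. -/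
open Finset

/-- Let `ξ` be a primitive 8th root of unity in `ℂ`. Then
`∑_{k=1}^{7} 1/((1-ξ^k)(1-ξ^{3k})) = 5/4`, `∑_{k=1}^{7} 1/((1-ξ^k)(1-ξ^{5k})) = 9/4`
and `∑_{k=1}^{7} 1/((1-ξ^k)(1-ξ^{7k})) = 21/4`. -/
theorem sum_inv_one_sub_primitiveRoot_eight (ξ : ℂ) (hξ : IsPrimitiveRoot ξ 8) :
    (∑ k ∈ Finset.Icc 1 7, 1 / ((1 - ξ ^ k) * (1 - ξ ^ (3 * k))) = 5 / 4) ∧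
    (∑ k ∈ Finset.Icc 1 7, 1 / ((1 - ξ ^ k) * (1 - ξ ^ (5 * k))) = 9 / 4) ∧
    (∑ k ∈ Finset.Icc 1 7, 1 / ((1 - ξ ^ k) * (1 - ξ ^ (7 * k))) = 21 / 4) := by
  have h8 : ξ ^ 8 = 1 := hξ.pow_eq_one
  have hne4 : ξ ^ 4 ≠ 1 := hξ.pow_ne_one_of_pos_of_lt (by norm_num) (by norm_num)
  have h4 : ξ ^ 4 = -1 := by
    have hz : (ξ ^ 4 - 1) * (ξ ^ 4 + 1) = 0 := by linear_combination h8
    rcases mul_eq_zero.1 hz with h | h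
    · exact absurd (sub_eq_zero.1 h) hne4
    · exact eq_neg_of_add_eq_zero_left h
  have i1 : (1 - ξ)⁻¹ = ((1/2) + (1/2)*ξ + (1/2)*ξ^2 + (1/2)*ξ^3 : ℂ) := inv_eq_of_mul_eq_one_right (by linear_combination (((-1/2) : ℂ)) * h4)
  have i2 : (1 - ξ ^ 2)⁻¹ = ((1/2) + (1/2)*ξ^2 : ℂ) := inv_eq_of_mul_eq_one_right (by linear_combination (((-1/2) : ℂ)) * h4)
  have i3 : (1 - ξ ^ 3)⁻¹ = ((1/2) + (1/2)*ξ + (-1/2)*ξ^2 + (1/2)*ξ^3 : ℂ) := inv_eq_of_mul_eq_one_right (by linear_combination (((-1/2) + (1/2)*ξ + (-1/2)*ξ^2 : ℂ)) * h4)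
  have i4 : (1 - ξ ^ 4)⁻¹ = ((1/2) : ℂ) := inv_eq_of_mul_eq_one_right (by linear_combination (((-1/2) : ℂ)) * h4)
  have i5 : (1 - ξ ^ 5)⁻¹ = ((1/2) + (-1/2)*ξ + (1/2)*ξ^2 + (-1/2)*ξ^3 : ℂ) := inv_eq_of_mul_eq_one_right (by linear_combination (((-1/2) + (-1/2)*ξ + (1/2)*ξ^2 + (-1/2)*ξ^3 + (1/2)*ξ^4 : ℂ)) * h4)
  have i6 : (1 - ξ ^ 6)⁻¹ = ((1/2) + (-1/2)*ξ^2 : ℂ) := inv_eq_of_mul_eq_one_right (by linear_combination (((-1/2) + (-1/2)*ξ^2 + (1/2)*ξ^4 : ℂ)) * h4)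
  have i7 : (1 - ξ ^ 7)⁻¹ = ((1/2) + (-1/2)*ξ + (-1/2)*ξ^2 + (-1/2)*ξ^3 : ℂ) := inv_eq_of_mul_eq_one_right (by linear_combination (((-1/2) + (-1/2)*ξ + (-1/2)*ξ^2 + (-1/2)*ξ^3 + (1/2)*ξ^4 + (1/2)*ξ^5 + (1/2)*ξ^6 : ℂ)) * h4)
  have i9 : (1 - ξ ^ 9)⁻¹ = ((1/2) + (1/2)*ξ + (1/2)*ξ^2 + (1/2)*ξ^3 : ℂ) := inv_eq_of_mul_eq_one_right (by linear_combination (((-1/2) + (1/2)*ξ + (1/2)*ξ^2 + (1/2)*ξ^3 + (1/2)*ξ^4 + (-1/2)*ξ^5 + (-1/2)*ξ^6 + (-1/2)*ξ^7 + (-1/2)*ξ^8 : ℂ)) * h4)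
  have i10 : (1 - ξ ^ 10)⁻¹ = ((1/2) + (1/2)*ξ^2 : ℂ) := inv_eq_of_mul_eq_one_right (by linear_combination (((-1/2) + (1/2)*ξ^2 + (1/2)*ξ^4 + (-1/2)*ξ^6 + (-1/2)*ξ^8 : ℂ)) * h4)
  have i12 : (1 - ξ ^ 12)⁻¹ = ((1/2) : ℂ) := inv_eq_of_mul_eq_one_right (by linear_combination (((-1/2) + (1/2)*ξ^4 + (-1/2)*ξ^8 : ℂ)) * h4)
  have i14 : (1 - ξ ^ 14)⁻¹ = ((1/2) + (-1/2)*ξ^2 : ℂ) := inv_eq_of_mul_eq_one_right (by linear_combination (((-1/2) + (-1/2)*ξ^2 + (1/2)*ξ^4 + (1/2)*ξ^6 + (-1/2)*ξ^8 + (-1/2)*ξ^10 + (1/2)*ξ^12 : ℂ)) * h4)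
  have i15 : (1 - ξ ^ 15)⁻¹ = ((1/2) + (-1/2)*ξ + (-1/2)*ξ^2 + (-1/2)*ξ^3 : ℂ) := inv_eq_of_mul_eq_one_right (by linear_combination (((-1/2) + (-1/2)*ξ + (-1/2)*ξ^2 + (-1/2)*ξ^3 + (1/2)*ξ^4 + (1/2)*ξ^5 + (1/2)*ξ^6 + (1/2)*ξ^7 + (-1/2)*ξ^8 + (-1/2)*ξ^9 + (-1/2)*ξ^10 + (-1/2)*ξ^11 + (1/2)*ξ^12 + (1/2)*ξ^13 + (1/2)*ξ^14 : ℂ)) * h4)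
  have i18 : (1 - ξ ^ 18)⁻¹ = ((1/2) + (1/2)*ξ^2 : ℂ) := inv_eq_of_mul_eq_one_right (by linear_combination (((-1/2) + (1/2)*ξ^2 + (1/2)*ξ^4 + (-1/2)*ξ^6 + (-1/2)*ξ^8 + (1/2)*ξ^10 + (1/2)*ξ^12 + (-1/2)*ξ^14 + (-1/2)*ξ^16 : ℂ)) * h4)
  have i20 : (1 - ξ ^ 20)⁻¹ = ((1/2) : ℂ) := inv_eq_of_mul_eq_one_right (by linear_combination (((-1/2) + (1/2)*ξ^4 + (-1/2)*ξ^8 + (1/2)*ξ^12 + (-1/2)*ξ^16 : ℂ)) * h4)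
  have i21 : (1 - ξ ^ 21)⁻¹ = ((1/2) + (-1/2)*ξ + (1/2)*ξ^2 + (-1/2)*ξ^3 : ℂ) := inv_eq_of_mul_eq_one_right (by linear_combination (((-1/2) + (-1/2)*ξ + (1/2)*ξ^2 + (-1/2)*ξ^3 + (1/2)*ξ^4 + (1/2)*ξ^5 + (-1/2)*ξ^6 + (1/2)*ξ^7 + (-1/2)*ξ^8 + (-1/2)*ξ^9 + (1/2)*ξ^10 + (-1/2)*ξ^11 + (1/2)*ξ^12 + (1/2)*ξ^13 + (-1/2)*ξ^14 + (1/2)*ξ^15 + (-1/2)*ξ^16 + (-1/2)*ξ^17 + (1/2)*ξ^18 + (-1/2)*ξ^19 + (1/2)*ξ^20 : ℂ)) * h4)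
  have i25 : (1 - ξ ^ 25)⁻¹ = ((1/2) + (1/2)*ξ + (1/2)*ξ^2 + (1/2)*ξ^3 : ℂ) := inv_eq_of_mul_eq_one_right (by linear_combination (((-1/2) + (1/2)*ξ + (1/2)*ξ^2 + (1/2)*ξ^3 + (1/2)*ξ^4 + (-1/2)*ξ^5 + (-1/2)*ξ^6 + (-1/2)*ξ^7 + (-1/2)*ξ^8 + (1/2)*ξ^9 + (1/2)*ξ^10 + (1/2)*ξ^11 + (1/2)*ξ^12 + (-1/2)*ξ^13 + (-1/2)*ξ^14 + (-1/2)*ξ^15 + (-1/2)*ξ^16 + (1/2)*ξ^17 + (1/2)*ξ^18 + (1/2)*ξ^19 + (1/2)*ξ^20 + (-1/2)*ξ^21 + (-1/2)*ξ^22 + (-1/2)*ξ^23 + (-1/2)*ξ^24 : ℂ)) * h4)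
  have i28 : (1 - ξ ^ 28)⁻¹ = ((1/2) : ℂ) := inv_eq_of_mul_eq_one_right (by linear_combination (((-1/2) + (1/2)*ξ^4 + (-1/2)*ξ^8 + (1/2)*ξ^12 + (-1/2)*ξ^16 + (1/2)*ξ^20 + (-1/2)*ξ^24 : ℂ)) * h4)
  have i30 : (1 - ξ ^ 30)⁻¹ = ((1/2) + (-1/2)*ξ^2 : ℂ) := inv_eq_of_mul_eq_one_right (by linear_combination (((-1/2) + (-1/2)*ξ^2 + (1/2)*ξ^4 + (1/2)*ξ^6 + (-1/2)*ξ^8 + (-1/2)*ξ^10 + (1/2)*ξ^12 + (1/2)*ξ^14 + (-1/2)*ξ^16 + (-1/2)*ξ^18 + (1/2)*ξ^20 + (1/2)*ξ^22 + (-1/2)*ξ^24 + (-1/2)*ξ^26 + (1/2)*ξ^28 : ℂ)) * h4)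
  have i35 : (1 - ξ ^ 35)⁻¹ = ((1/2) + (1/2)*ξ + (-1/2)*ξ^2 + (1/2)*ξ^3 : ℂ) := inv_eq_of_mul_eq_one_right (by linear_combination (((-1/2) + (1/2)*ξ + (-1/2)*ξ^2 + (1/2)*ξ^3 + (1/2)*ξ^4 + (-1/2)*ξ^5 + (1/2)*ξ^6 + (-1/2)*ξ^7 + (-1/2)*ξ^8 + (1/2)*ξ^9 + (-1/2)*ξ^10 + (1/2)*ξ^11 + (1/2)*ξ^12 + (-1/2)*ξ^13 + (1/2)*ξ^14 + (-1/2)*ξ^15 + (-1/2)*ξ^16 + (1/2)*ξ^17 + (-1/2)*ξ^18 + (1/2)*ξ^19 + (1/2)*ξ^20 + (-1/2)*ξ^21 + (1/2)*ξ^22 + (-1/2)*ξ^23 + (-1/2)*ξ^24 + (1/2)*ξ^25 + (-1/2)*ξ^26 + (1/2)*ξ^27 + (1/2)*ξ^28 + (-1/2)*ξ^29 + (1/2)*ξ^30 + (-1/2)*ξ^31 + (-1/2)*ξ^32 + (1/2)*ξ^33 + (-1/2)*ξ^34 : ℂ)) * h4)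
  have i42 : (1 - ξ ^ 42)⁻¹ = ((1/2) + (1/2)*ξ^2 : ℂ) := inv_eq_of_mul_eq_one_right (by linear_combination (((-1/2) + (1/2)*ξ^2 + (1/2)*ξ^4 + (-1/2)*ξ^6 + (-1/2)*ξ^8 + (1/2)*ξ^10 + (1/2)*ξ^12 + (-1/2)*ξ^14 + (-1/2)*ξ^16 + (1/2)*ξ^18 + (1/2)*ξ^20 + (-1/2)*ξ^22 + (-1/2)*ξ^24 + (1/2)*ξ^26 + (1/2)*ξ^28 + (-1/2)*ξ^30 + (-1/2)*ξ^32 + (1/2)*ξ^34 + (1/2)*ξ^36 + (-1/2)*ξ^38 + (-1/2)*ξ^40 : ℂ)) * h4)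
  have i49 : (1 - ξ ^ 49)⁻¹ = ((1/2) + (1/2)*ξ + (1/2)*ξ^2 + (1/2)*ξ^3 : ℂ) := inv_eq_of_mul_eq_one_right (by linear_combination (((-1/2) + (1/2)*ξ + (1/2)*ξ^2 + (1/2)*ξ^3 + (1/2)*ξ^4 + (-1/2)*ξ^5 + (-1/2)*ξ^6 + (-1/2)*ξ^7 + (-1/2)*ξ^8 + (1/2)*ξ^9 + (1/2)*ξ^10 + (1/2)*ξ^11 + (1/2)*ξ^12 + (-1/2)*ξ^13 + (-1/2)*ξ^14 + (-1/2)*ξ^15 + (-1/2)*ξ^16 + (1/2)*ξ^17 + (1/2)*ξ^18 + (1/2)*ξ^19 + (1/2)*ξ^20 + (-1/2)*ξ^21 + (-1/2)*ξ^22 + (-1/2)*ξ^23 + (-1/2)*ξ^24 + (1/2)*ξ^25 + (1/2)*ξ^26 + (1/2)*ξ^27 + (1/2)*ξ^28 + (-1/2)*ξ^29 + (-1/2)*ξ^30 + (-1/2)*ξ^31 + (-1/2)*ξ^32 + (1/2)*ξ^33 + (1/2)*ξ^34 + (1/2)*ξ^35 + (1/2)*ξ^36 + (-1/2)*ξ^37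 + (-1/2)*ξ^38 + (-1/2)*ξ^39 + (-1/2)*ξ^40 + (1/2)*ξ^41 + (1/2)*ξ^42 + (1/2)*ξ^43 + (1/2)*ξ^44 + (-1/2)*ξ^45 + (-1/2)*ξ^46 + (-1/2)*ξ^47 + (-1/2)*ξ^48 : ℂ)) * h4)
  refine ⟨?_, ?_, ?_⟩
  · norm_num [Finset.sum_Icc_succ_top]
    rw [i1, i2, i3, i4, i5, i6, i7, i9, i12, i15, i18, i21]
    linear_combination ((1/2) + (1)*ξ^2 : ℂ) * h4
  · norm_num [Finset.sum_Icc_succ_top]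
    rw [i1, i2, i3, i4, i5, i6, i7, i10, i15, i20, i25, i30, i35]
    linear_combination ((-1/2) + (-1)*ξ^2 : ℂ) * h4
  · norm_num [Finset.sum_Icc_succ_top]
    rw [i1, i2, i3, i4, i5, i6, i7, i14, i21, i28, i35, i42, i49]
    linear_combination ((-7/2) + (-1)*ξ^2 : ℂ) * h4
end
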